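/- arXiv:2505.15930 — 7 statements merged into one kernel-verified Lean document; each statement's English description precedes it below -/
import Mathlib

section
/- Let a, b ≥ 1 and s ∈ ℝ. The function g : ℝ → ℝ defined by g(x) = ((a/2)² + (x/2)²)^{(a−1)/2} · ((b/2)² + ((s−x)/2)²)^{(b−1)/2} · exp(−x·arctan(x/a) − (s−x)·arctan((s−x)/b)) is log-concave on ℝ, i.e., for all x, y ∈ ℝ and t ∈ [0,1], g(t·x + (1−t)·y) ≥ g(x)^t · g(y)^{1−t}. -/
/-!
Taking logarithms, `log g x = w a x + w b (s - x)` with `w = logWeight`.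
A direct computation gives
`w a'' x = -(a³ + a² + (a - 1) x²) / (a² + x²)²`, which is nonpositive for `a ≥ 1`, so `w a`
is concave, hence so is `log g`, and exponentiating the concavity inequality gives log-concavity.
-/

open Real Set

noncomputable def logWeight (a x : ℝ) : ℝ :=
  (a - 1) / 2 * log ((a / 2) ^ 2 + (x / 2) ^ 2) - x * arctan (x / a)

noncomputable def logWeightDeriv (a x : ℝ) : ℝ :=
  -arctan (x / a) - x / (a ^ 2 + x ^ 2)

lemma hasDerivAt_arctan_div {a : ℝ} (ha : 0 < a) (x : ℝ) :
    HasDerivAt (fun y => arctan (y / a)) (a / (a ^ 2 + x ^ 2)) x := by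
  refine ((hasDerivAt_id' x).div_const a).arctan.congr_deriv ?_
  field_simp

lemma hasDerivAt_logWeight {a : ℝ} (ha : 0 < a) (x : ℝ) :
    HasDerivAt (logWeight a) (logWeightDeriv a x) x := by
  have hlog :
      HasDerivAt (fun y => log ((a / 2) ^ 2 + (y / 2) ^ 2)) (2 * x / (a ^ 2 + x ^ 2)) x := by
    refine ((((hasDerivAt_id' x).div_const 2).fun_pow 2).const_add ((a / 2) ^ 2)).log
      (by positivity) |>.congr_deriv ?_
    field_simp
    ring
  refine (hlog.const_mul ((a - 1) / 2)).sub ((hasDerivAt_id' x).mul (hasDerivAt_arctan_div ha x))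
    |>.congr_deriv ?_
  rw [logWeightDeriv]
  field_simp
  ring

lemma hasDerivAt_logWeightDeriv {a : ℝ} (ha : 0 < a) (x : ℝ) :
    HasDerivAt (logWeightDeriv a) (-(a ^ 3 + a ^ 2 + (a - 1) * x ^ 2) / (a ^ 2 + x ^ 2) ^ 2) x := by
  have hq : HasDerivAt (fun y => y / (a ^ 2 + y ^ 2))
      ((a ^ 2 + x ^ 2 - x * (2 * x)) / (a ^ 2 + x ^ 2) ^ 2) x := by
    refine (hasDerivAt_id' x).div ((hasDerivAt_pow 2 x).const_add (a ^ 2)) (by positivity)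
      |>.congr_deriv ?_
    ring
  refine (hasDerivAt_arctan_div ha x).neg.sub hq |>.congr_deriv ?_
  field_simp
  ring

lemma concaveOn_logWeight {a : ℝ} (ha : 1 ≤ a) : ConcaveOn ℝ univ (logWeight a) := by
  have ha0 : 0 < a := by linarith
  refine concaveOn_of_hasDerivWithinAt2_nonpos convex_univ
    (fun x _ => (hasDerivAt_logWeight ha0 x).continuousAt.continuousWithinAt)
    (fun x _ => (hasDerivAt_logWeight ha0 x).hasDerivWithinAt)
    (fun x _ => (hasDerivAt_logWeightDeriv ha0 x).hasDerivWithinAt) fun x _ => ?_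
  rw [neg_div, neg_nonpos]
  have : 0 ≤ (a - 1) * x ^ 2 := mul_nonneg (by linarith) (sq_nonneg x)
  positivity

lemma rpow_mul_exp_eq_exp_logWeight {a : ℝ} (ha : 0 < a) (x : ℝ) :
    ((a / 2) ^ 2 + (x / 2) ^ 2) ^ ((a - 1) / 2) * exp (-x * arctan (x / a)) =
      exp (logWeight a x) := by
  rw [rpow_def_of_pos (by positivity), ← exp_add, logWeight]
  ring_nf

lemma ConcaveOn.comp_const_sub {f : ℝ → ℝ} (hf : ConcaveOn ℝ univ f) (s : ℝ) :
    ConcaveOn ℝ univ (fun x => f (s - x)) := by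
  refine ⟨convex_univ, fun x _ y _ t u ht hu htu => ?_⟩
  convert hf.2 (mem_univ (s - x)) (mem_univ (s - y)) ht hu htu using 2
  simp only [smul_eq_mul]
  linear_combination -s * htu

lemma ConcaveOn.exp_rpow_mul_exp_rpow_le {f : ℝ → ℝ} (hf : ConcaveOn ℝ univ f)
    {x y t : ℝ} (ht0 : 0 ≤ t) (ht1 : t ≤ 1) :
    exp (f x) ^ t * exp (f y) ^ (1 - t) ≤ exp (f (t * x + (1 - t) * y)) := by
  rw [← exp_mul, ← exp_mul, ← exp_add, exp_le_exp, mul_comm, mul_comm (f y)]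
  exact hf.2 (mem_univ x) (mem_univ y) ht0 (by linarith) (by ring)

/-- For `a, b ≥ 1` and `s ∈ ℝ`, the function
`g(x) = ((a/2)² + (x/2)²)^((a−1)/2) · ((b/2)² + ((s−x)/2)²)^((b−1)/2) ·
exp(−x·arctan(x/a) − (s−x)·arctan((s−x)/b))` is log-concave on ℝ. -/
theorem stmt0 (a b s : ℝ) (ha : 1 ≤ a) (hb : 1 ≤ b)
    (g : ℝ → ℝ)
    (hg : ∀ x : ℝ, g x =
      ((a / 2) ^ 2 + (x / 2) ^ 2) ^ ((a - 1) / 2) *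
      ((b / 2) ^ 2 + ((s - x) / 2) ^ 2) ^ ((b - 1) / 2) *
      Real.exp (-x * Real.arctan (x / a) - (s - x) * Real.arctan ((s - x) / b))) :
    ∀ x y t : ℝ, 0 ≤ t → t ≤ 1 →
      g (t * x + (1 - t) * y) ≥ g x ^ t * g y ^ (1 - t) := by
  have hg_exp : ∀ x, g x = exp (logWeight a x + logWeight b (s - x)) := fun x => by
    rw [hg, exp_add, ← rpow_mul_exp_eq_exp_logWeight (by linarith),
      ← rpow_mul_exp_eq_exp_logWeight (by linarith), sub_eq_add_neg (-x * _), exp_add,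
      neg_mul (s - x)]
    ring
  have hconcave : ConcaveOn ℝ univ fun x => logWeight a x + logWeight b (s - x) :=
    (concaveOn_logWeight ha).add ((concaveOn_logWeight hb).comp_const_sub s)
  intro x y t ht0 ht1
  simp only [hg_exp]
  exact hconcave.exp_rpow_mul_exp_rpow_le ht0 ht1
end

section
/- Let 0 < τ ≤ τ', η ≥ 0, and r ≥ 0 be real numbers. Then for every t ∈ [τ, τ']: if r ≤ η + 1/τ' then t·min(1, exp(1 + η·t − t·r)) ≤ τ'; if η + 1/τ' ≤ r ≤ η + 1/τ then t·min(1, exp(1 + η·t − t·r)) ≤ 1/(r − η); and if r ≥ η + 1/τ then t·min(1, exp(1 + η·t − t·r)) ≤ τ·min(1, exp(1 + η·τ − τ·r)). -/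
open Real

/-- the elementary bound behind Lemma 3 of the paper. -/
theorem stmt4 (τ τ' η r : ℝ) (hτ : 0 < τ) (hττ' : τ ≤ τ') (hη : 0 ≤ η) (hr : 0 ≤ r) :
    ∀ t : ℝ, τ ≤ t → t ≤ τ' →
      (r ≤ η + 1 / τ' → t * min 1 (Real.exp (1 + η * t - t * r)) ≤ τ') ∧
      (η + 1 / τ' ≤ r → r ≤ η + 1 / τ →
        t * min 1 (Real.exp (1 + η * t - t * r)) ≤ 1 / (r - η)) ∧
      (η + 1 / τ ≤ r →
        t * min 1 (Real.exp (1 + η * t - t * r)) ≤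
          τ * min 1 (Real.exp (1 + η * τ - τ * r))) := by
  intro t ht1 ht2
  have ht0 : 0 < t := lt_of_lt_of_le hτ ht1
  have hτ'0 : 0 < τ' := lt_of_lt_of_le hτ hττ'
  set s := r - η with hs
  have keyt : 1 + η * t - t * r = 1 - t * s := by rw [hs]; ring
  have keyτ : 1 + η * τ - τ * r = 1 - τ * s := by rw [hs]; ring
  refine ⟨?_, ?_, ?_⟩
  · intro _
    calc t * min 1 (Real.exp (1 + η * t - t * r)) ≤ t * 1 :=
          mul_le_mul_of_nonneg_left (min_le_left _ _) ht0.le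
      _ = t := mul_one t
      _ ≤ τ' := ht2
  · intro h1 _
    have hs0 : 0 < s := by
      have : (0:ℝ) < 1 / τ' := by positivity
      rw [hs]; linarith
    rcases le_or_gt t (1 / s) with h | h
    · calc t * min 1 (Real.exp (1 + η * t - t * r)) ≤ t * 1 :=
            mul_le_mul_of_nonneg_left (min_le_left _ _) ht0.le
        _ = t := mul_one t
        _ ≤ 1 / s := h
    · have hts : 1 ≤ t * s := by
        rw [div_lt_iff₀ hs0] at h; linarith
      have hexp : Real.exp (t * s - 1) ≥ t * s := by
        have := Real.add_one_le_exp (t * s - 1); linarith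
      have hexp2 : Real.exp (1 - t * s) ≤ 1 / (t * s) := by
        rw [le_div_iff₀ (by positivity : (0:ℝ) < t * s)]
        have hmul : Real.exp (1 - t * s) * Real.exp (t * s - 1) = 1 := by
          rw [← Real.exp_add]; norm_num
        nlinarith [Real.exp_pos (1 - t * s)]
      calc t * min 1 (Real.exp (1 + η * t - t * r))
          ≤ t * Real.exp (1 - t * s) := by
            rw [keyt]; exact mul_le_mul_of_nonneg_left (min_le_right _ _) ht0.le
        _ ≤ t * (1 / (t * s)) := mul_le_mul_of_nonneg_left hexp2 ht0.le
        _ = 1 / s := by field_simp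
  · intro h3
    have hs0 : 0 < s := by
      have : (0:ℝ) < 1 / τ := by positivity
      rw [hs]; linarith
    have hτs : 1 ≤ τ * s := by
      have : 1 / τ ≤ s := by rw [hs]; linarith
      rw [div_le_iff₀ hτ] at this; linarith [mul_comm τ s]
    have hts : τ * s ≤ t * s := mul_le_mul_of_nonneg_right ht1 hs0.le
    have hmt : min 1 (Real.exp (1 + η * t - t * r)) = Real.exp (1 - t * s) := by
      rw [keyt]; exact min_eq_right (Real.exp_le_one_iff.mpr (by linarith))
    have hmτ : min 1 (Real.exp (1 + η * τ - τ * r)) = Real.exp (1 - τ * s) := by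
      rw [keyτ]; exact min_eq_right (Real.exp_le_one_iff.mpr (by linarith))
    rw [hmt, hmτ]
    have h1 : t / τ ≤ Real.exp (t * s - τ * s) := by
      have he := Real.add_one_le_exp (t * s - τ * s)
      have : t / τ ≤ 1 + (t * s - τ * s) := by
        rw [div_le_iff₀ hτ]
        have h1τ : 1 / τ ≤ s := by rw [hs]; linarith
        have := (div_le_iff₀ hτ).mp h1τ
        nlinarith [sub_nonneg.mpr ht1]
      linarith
    calc t * Real.exp (1 - t * s)
        ≤ (τ * Real.exp (t * s - τ * s)) * Real.exp (1 - t * s) := by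
          apply mul_le_mul_of_nonneg_right _ (Real.exp_pos _).le
          rw [div_le_iff₀ hτ] at h1; linarith [mul_comm τ (Real.exp (t * s - τ * s))]
      _ = τ * Real.exp (1 - τ * s) := by
          rw [mul_assoc, ← Real.exp_add]; ring_nf
end

section
/- Let a > 1, s ∈ ℝ, and set β = s/(2(a−1)). The function h(y) = e^{s y}·(cos²y)^{a−1} on (−π/2, π/2) attains its maximum at y* = arctan(β), and h(y*) = ( e^{2β·arctan(β)} / (1 + β²) )^{a−1}, i.e., h(y) ≤ h(y*) for all y ∈ (−π/2, π/2). -/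
/-!
Writing `s = 2(a - 1)β`, we get `h y = ((e^{βy} cos y)²)^{a-1}`, so it suffices to maximise
`g y = e^{βy} cos y` on `(-π/2, π/2)`, where `g` is positive. Its derivative
`e^{βy} cos y (β - tan y)` changes sign from `+` to `-` exactly at `y = arctan β`,
and `cos² (arctan β) = 1 / (1 + β²)` gives the value.
-/

open Real Set

lemma hasDerivAt_exp_mul_mul_cos {β t : ℝ} (hcos : cos t ≠ 0) :
    HasDerivAt (fun t => exp (β * t) * cos t) (exp (β * t) * cos t * (β - tan t)) t := by
  have h := ((hasDerivAt_id t).const_mul β).exp.mul (hasDerivAt_cos t)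
  refine h.congr_deriv (f := fun t => exp (β * t) * cos t) ?_
  rw [← tan_mul_cos hcos]
  simp only [id, mul_one]
  ring

lemma isMaxOn_exp_mul_mul_cos (β : ℝ) :
    IsMaxOn (fun t => exp (β * t) * cos t) (Ioo (-(π / 2)) (π / 2)) (arctan β) := by
  have hderiv {t : ℝ} (ht : t ∈ Ioo (-(π / 2)) (π / 2)) :=
    (hasDerivAt_exp_mul_mul_cos (β := β) (cos_pos_of_mem_Ioo ht).ne').deriv
  have hpos {t : ℝ} (ht : t ∈ Ioo (-(π / 2)) (π / 2)) : 0 < exp (β * t) * cos t :=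
    mul_pos (exp_pos _) (cos_pos_of_mem_Ioo ht)
  have hdiff : Differentiable ℝ (fun t => exp (β * t) * cos t) := by fun_prop
  have harctan : arctan β ∈ Ioo (-(π / 2)) (π / 2) :=
    ⟨neg_pi_div_two_lt_arctan β, arctan_lt_pi_div_two β⟩
  refine isMaxOn_Ioo_of_deriv (by fun_prop) hdiff.differentiableOn hdiff.differentiableOn
    (fun t ht => ?_) (fun t ht => ?_)
  · have ht' : t ∈ Ioo (-(π / 2)) (π / 2) := ⟨ht.1, ht.2.trans harctan.2⟩
    have htan : tan t < β := by
      simpa only [tan_arctan] using strictMonoOn_tan ht' harctan ht.2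
    rw [hderiv ht']
    exact mul_nonneg (hpos ht').le (by linarith)
  · have ht' : t ∈ Ioo (-(π / 2)) (π / 2) := ⟨harctan.1.trans ht.1, ht.2⟩
    have htan : β < tan t := by
      simpa only [tan_arctan] using strictMonoOn_tan harctan ht' ht.1
    rw [hderiv ht']
    exact mul_nonpos_of_nonneg_of_nonpos (hpos ht').le (by linarith)

lemma sq_exp_mul_arctan_mul_cos_arctan (β : ℝ) :
    (exp (β * arctan β) * cos (arctan β)) ^ 2 = exp (2 * β * arctan β) / (1 + β ^ 2) := by
  rw [mul_pow, cos_sq_arctan, ← exp_nat_mul]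
  ring_nf

/-- for `a > 1`, `s ∈ ℝ`, `β = s/(2(a−1))`, the function
`h(y) = e^{sy}·(cos² y)^{a−1}` on `(−π/2, π/2)` attains its maximum at
`y* = arctan β`, with `h(y*) = (e^{2β·arctan β}/(1+β²))^{a−1}`. -/
theorem stmt8 (a s β : ℝ) (ha : 1 < a) (hβ : β = s / (2 * (a - 1)))
    (h : ℝ → ℝ)
    (hh : ∀ y : ℝ, h y = Real.exp (s * y) * (Real.cos y ^ 2) ^ (a - 1)) :
    h (Real.arctan β) = (Real.exp (2 * β * Real.arctan β) / (1 + β ^ 2)) ^ (a - 1) ∧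
    ∀ y ∈ Ioo (-(π / 2)) (π / 2), h y ≤ h (Real.arctan β) := by
  have hs : s = 2 * (a - 1) * β := by
    rw [hβ]; field_simp [(sub_pos.2 ha).ne']
  have hh' (y : ℝ) : h y = ((exp (β * y) * cos y) ^ 2) ^ (a - 1) := by
    rw [hh, mul_pow, mul_rpow (by positivity) (sq_nonneg _), ← exp_nat_mul, ← exp_mul, hs]
    ring_nf
  refine ⟨by rw [hh', sq_exp_mul_arctan_mul_cos_arctan], fun y hy => ?_⟩
  rw [hh', hh']
  have hpos : 0 ≤ exp (β * y) * cos y := (mul_pos (exp_pos _) (cos_pos_of_mem_Ioo hy)).le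
  exact rpow_le_rpow (sq_nonneg _) (pow_le_pow_left₀ hpos (isMaxOn_exp_mul_mul_cos β hy) 2)
    (sub_pos.2 ha).le
end

section
/- Let 1/2 < a ≤ 1 and s ≥ 1. Then ∫₀^{π/2} ( (2z)/(π·sin z) )^{2(1−a)} · ( s^{2a−1}·z^{2a−2}·e^{−s z} / Γ(2a−1) ) dz ≥ (2/π)·( 1 − 2(2a−1)/(s·π) ), where Γ is the real Gamma function. (The integrand is the Gamma(2a−1, rate s) density multiplied by the acceptance function, and the right-hand side is nonnegative since 2a−1 ≤ 1 and s ≥ 1.) -/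
open Real MeasureTheory Set ProbabilityTheory

/-!
On `(0, π/2)` Jordan's inequality puts `2z/(π sin z)` in `[2/π, 1]`, so its power with exponent
`2(1-a) ≤ 1` is still at least `2/π`. It remains to bound from below the mass that the
Gamma(`2a-1`, `s`) law gives to `(0, π/2)`: by Markov's inequality and the mean `(2a-1)/s`, the
mass of `[π/2, ∞)` is at most `2(2a-1)/(sπ)`.
-/

lemma sub_div_le_setIntegral_Ioo {f : ℝ → ℝ} {t : ℝ} (ht : 0 < t)
    (hf : IntegrableOn f (Ioi 0)) (hxf : IntegrableOn (fun x ↦ x * f x) (Ioi 0))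
    (hf_nonneg : ∀ x ∈ Ioi 0, 0 ≤ f x) :
    (∫ x in Ioi 0, f x) - (∫ x in Ioi 0, x * f x) / t ≤ ∫ x in Ioo 0 t, f x := by
  have hIci : Ici t ⊆ Ioi 0 := Ici_subset_Ioi.mpr ht
  have hsplit : ∫ x in Ioi 0, f x = (∫ x in Ioo 0 t, f x) + ∫ x in Ici t, f x := by
    rw [← Ioo_union_Ici_eq_Ioi ht, setIntegral_union
      ((Iio_disjoint_Ici le_rfl).mono_left Ioo_subset_Iio_self) measurableSet_Ici
      (hf.mono_set Ioo_subset_Ioi_self) (hf.mono_set hIci)]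
  have htail : ∫ x in Ici t, f x ≤ (∫ x in Ioi 0, x * f x) / t := by
    rw [le_div_iff₀ ht, ← integral_mul_const]
    calc ∫ x in Ici t, f x * t
        ≤ ∫ x in Ici t, x * f x :=
          setIntegral_mono_on ((hf.mono_set hIci).mul_const t) (hxf.mono_set hIci)
            measurableSet_Ici fun x hx ↦ by
              rw [mul_comm]; exact mul_le_mul_of_nonneg_right hx (hf_nonneg x (hIci hx))
      _ ≤ ∫ x in Ioi 0, x * f x :=
          setIntegral_mono_set hxf
            ((ae_restrict_iff' measurableSet_Ioi).mpr (ae_of_all _ fun x hx ↦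
              mul_nonneg (le_of_lt hx) (hf_nonneg x hx)))
            (Filter.Eventually.of_forall hIci)
  linarith

lemma integrableOn_rpow_mul_exp_neg_mul_Ioi {c r : ℝ} (hc : -1 < c) (hr : 0 < r) :
    IntegrableOn (fun x : ℝ ↦ x ^ c * exp (-(r * x))) (Ioi 0) := by
  simpa only [rpow_one, neg_mul] using
    integrableOn_rpow_mul_exp_neg_mul_rpow hc (p := 1) one_pos hr

namespace ProbabilityTheory

variable {a r : ℝ}

lemma gammaPDFReal_eqOn_Ioi :
    EqOn (gammaPDFReal a r) (fun x ↦ r ^ a / Gamma a * (x ^ (a - 1) * exp (-(r * x))))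
      (Ioi 0) := fun x hx ↦ by
  rw [gammaPDFReal, if_pos (le_of_lt hx), mul_assoc]

lemma mul_gammaPDFReal_eqOn_Ioi :
    EqOn (fun x ↦ x * gammaPDFReal a r x)
      (fun x ↦ r ^ a / Gamma a * (x ^ (a + 1 - 1) * exp (-(r * x)))) (Ioi 0) :=
    fun x (hx : 0 < x) ↦ by
  simp only [gammaPDFReal_eqOn_Ioi hx, add_sub_cancel_right, rpow_sub_one hx.ne']
  field_simp

lemma integrableOn_gammaPDFReal_Ioi (ha : 0 < a) (hr : 0 < r) :
    IntegrableOn (gammaPDFReal a r) (Ioi 0) :=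
  IntegrableOn.congr_fun ((integrableOn_rpow_mul_exp_neg_mul_Ioi (by linarith) hr).const_mul _)
    gammaPDFReal_eqOn_Ioi.symm measurableSet_Ioi

lemma integrableOn_mul_gammaPDFReal_Ioi (ha : 0 < a) (hr : 0 < r) :
    IntegrableOn (fun x ↦ x * gammaPDFReal a r x) (Ioi 0) :=
  IntegrableOn.congr_fun ((integrableOn_rpow_mul_exp_neg_mul_Ioi (by linarith) hr).const_mul _)
    mul_gammaPDFReal_eqOn_Ioi.symm measurableSet_Ioi

lemma integral_gammaPDFReal_Ioi (ha : 0 < a) (hr : 0 < r) :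
    ∫ x in Ioi 0, gammaPDFReal a r x = 1 := by
  rw [setIntegral_congr_fun measurableSet_Ioi gammaPDFReal_eqOn_Ioi, integral_const_mul,
    integral_rpow_mul_exp_neg_mul_Ioi ha hr, div_rpow zero_le_one hr.le, one_rpow]
  field_simp [(Gamma_pos_of_pos ha).ne', (rpow_pos_of_pos hr a).ne']

lemma integral_mul_gammaPDFReal_Ioi (ha : 0 < a) (hr : 0 < r) :
    ∫ x in Ioi 0, x * gammaPDFReal a r x = a / r := by
  rw [setIntegral_congr_fun measurableSet_Ioi mul_gammaPDFReal_eqOn_Ioi, integral_const_mul,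
    integral_rpow_mul_exp_neg_mul_Ioi (by linarith) hr, Gamma_add_one ha.ne',
    div_rpow zero_le_one hr.le, one_rpow, rpow_add_one hr.ne']
  field_simp [(Gamma_pos_of_pos ha).ne', (rpow_pos_of_pos hr a).ne']

lemma one_sub_div_le_integral_gammaPDFReal_Ioo (ha : 0 < a) (hr : 0 < r) {t : ℝ} (ht : 0 < t) :
    1 - a / (r * t) ≤ ∫ x in Ioo 0 t, gammaPDFReal a r x := by
  have := sub_div_le_setIntegral_Ioo ht (integrableOn_gammaPDFReal_Ioi ha hr)
    (integrableOn_mul_gammaPDFReal_Ioi ha hr) fun x _ ↦ gammaPDFReal_nonneg ha hr x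
  rwa [integral_gammaPDFReal_Ioi ha hr, integral_mul_gammaPDFReal_Ioi ha hr, div_div] at this

end ProbabilityTheory

lemma two_mul_div_pi_mul_sin_mem_Icc {z : ℝ} (hz : z ∈ Ioo 0 (π / 2)) :
    2 * z / (π * sin z) ∈ Icc (2 / π) 1 := by
  obtain ⟨hz0, hzπ⟩ := hz
  have hsin : 0 < sin z := sin_pos_of_pos_of_lt_pi hz0 (by linarith [pi_pos])
  have hjordan : 2 / π * z ≤ sin z := mul_le_sin hz0.le hzπ.le
  constructor
  · rw [div_le_div_iff₀ pi_pos (by positivity)]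
    nlinarith [sin_le hz0.le, pi_pos]
  · rw [div_le_one (by positivity)]
    calc 2 * z = π * (2 / π * z) := by field_simp
      _ ≤ π * sin z := mul_le_mul_of_nonneg_left hjordan pi_pos.le

lemma rpow_le_max_rpow_one {c x : ℝ} (p : ℝ) (hc : 0 < c) (hx : x ∈ Icc c 1) :
    x ^ p ≤ max (c ^ p) 1 := by
  rcases le_total 0 p with hp | hp
  · exact le_max_of_le_right (rpow_le_one (hc.le.trans hx.1) hx.2 hp)
  · exact le_max_of_le_left (rpow_le_rpow_of_nonpos hc hx.1 hp)

lemma two_div_pi_le_rpow_two_mul_div_pi_mul_sin {z p : ℝ} (hz : z ∈ Ioo 0 (π / 2))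
    (hp : p ≤ 1) :
    2 / π ≤ (2 * z / (π * sin z)) ^ p :=
  have hmem := two_mul_div_pi_mul_sin_mem_Icc hz
  hmem.1.trans (self_le_rpow_of_le_one ((div_pos two_pos pi_pos).le.trans hmem.1) hmem.2 hp)

lemma mul_setIntegral_le_setIntegral_mul {α : Type*} [MeasurableSpace α] {μ : Measure α}
    {s : Set α} {φ g : α → ℝ} {c C : ℝ} (hs : MeasurableSet s) (hc : 0 ≤ c)
    (hφ_meas : AEStronglyMeasurable φ (μ.restrict s)) (hφ : ∀ x ∈ s, φ x ∈ Icc c C)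
    (hg : IntegrableOn g s μ) (hg_nonneg : ∀ x ∈ s, 0 ≤ g x) :
    c * ∫ x in s, g x ∂μ ≤ ∫ x in s, φ x * g x ∂μ := by
  have hφg : IntegrableOn (fun x ↦ φ x * g x) s μ :=
    hg.bdd_mul hφ_meas <| (ae_restrict_iff' hs).mpr <| ae_of_all _ fun x hx ↦ by
      rw [norm_of_nonneg (hc.trans (hφ x hx).1)]
      exact (hφ x hx).2
  rw [← integral_const_mul]
  exact setIntegral_mono_on (hg.const_mul c) hφg hs fun x hx ↦
    mul_le_mul_of_nonneg_right (hφ x hx).1 (hg_nonneg x hx)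

theorem stmt14_general (a s : ℝ) (ha1 : 1 / 2 < a) (hs : 1 ≤ s) :
    (2 / π) * (1 - 2 * (2 * a - 1) / (s * π)) ≤
      ∫ z in Set.Ioo (0 : ℝ) (π / 2),
        ((2 * z) / (π * Real.sin z)) ^ (2 * (1 - a)) *
          (s ^ (2 * a - 1) * z ^ (2 * a - 2) * Real.exp (-(s * z)) /
            Real.Gamma (2 * a - 1)) := by
  have hb : 0 < 2 * a - 1 := by linarith
  have hs0 : 0 < s := by linarith
  have hdensity : EqOn
      (fun z ↦ s ^ (2 * a - 1) * z ^ (2 * a - 2) * exp (-(s * z)) / Gamma (2 * a - 1))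
      (gammaPDFReal (2 * a - 1) s) (Ioo 0 (π / 2)) := fun z hz ↦ by
    rw [gammaPDFReal, if_pos hz.1.le]
    ring_nf
  rw [setIntegral_congr_fun measurableSet_Ioo fun z hz ↦ congrArg (_ * ·) (hdensity hz)]
  have hacceptance : ∀ z ∈ Ioo 0 (π / 2),
      (2 * z / (π * sin z)) ^ (2 * (1 - a)) ∈ Icc (2 / π) (max ((2 / π) ^ (2 * (1 - a))) 1) :=
    fun z hz ↦ ⟨two_div_pi_le_rpow_two_mul_div_pi_mul_sin hz (by linarith),
      rpow_le_max_rpow_one _ (by positivity) (two_mul_div_pi_mul_sin_mem_Icc hz)⟩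
  calc 2 / π * (1 - 2 * (2 * a - 1) / (s * π))
      = 2 / π * (1 - (2 * a - 1) / (s * (π / 2))) := by ring
    _ ≤ 2 / π * ∫ z in Ioo 0 (π / 2), gammaPDFReal (2 * a - 1) s z :=
      mul_le_mul_of_nonneg_left
        (one_sub_div_le_integral_gammaPDFReal_Ioo hb hs0 (by positivity)) (by positivity)
    _ ≤ _ :=
      mul_setIntegral_le_setIntegral_mul measurableSet_Ioo (by positivity)
        (Measurable.aestronglyMeasurable (by fun_prop))
        hacceptance ((integrableOn_gammaPDFReal_Ioi hb hs0).mono_set Ioo_subset_Ioi_self)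
        fun z _ ↦ gammaPDFReal_nonneg hb hs0 z

/-- for `1/2 < a ≤ 1` and `s ≥ 1`, the acceptance probability of
the gamma-rejection algorithm is at least `(2/π)·(1 − 2(2a−1)/(sπ))`:
`∫₀^{π/2} ((2z)/(π·sin z))^{2(1−a)} · (s^{2a−1}·z^{2a−2}·e^{−sz}/Γ(2a−1)) dz
  ≥ (2/π)·(1 − 2(2a−1)/(sπ))`. -/
theorem stmt14 (a s : ℝ) (ha1 : 1 / 2 < a) (ha2 : a ≤ 1) (hs : 1 ≤ s) :
    (2 / π) * (1 - 2 * (2 * a - 1) / (s * π)) ≤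
      ∫ z in Set.Ioo (0 : ℝ) (π / 2),
        ((2 * z) / (π * Real.sin z)) ^ (2 * (1 - a)) *
          (s ^ (2 * a - 1) * z ^ (2 * a - 2) * Real.exp (-(s * z)) /
            Real.Gamma (2 * a - 1)) :=
  stmt14_general a s ha1 hs
end

section
/- For every ρ > 0 and every x ∈ ℝ, |Γ(ρ + i x)|² = ∫₀^∞ ∫₀^∞ cos( x·(log t − log u) ) · t^{ρ−1}·u^{ρ−1}·e^{−t−u} dt du, where Γ is the Gamma function evaluated at the complex argument ρ + i x. -/
/-! Writing `Γ(s) = ∫₀^∞ e^{-t} t^{s-1} dt`, the square `|Γ(s)|² = Γ(s) · conj Γ(s)` is a double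
integral, and for `s = ρ + ix` the real part of the integrand
`e^{-t} t^{s-1} · conj (e^{-u} u^{s-1})` is `cos (x (log t - log u)) t^{ρ-1} u^{ρ-1} e^{-t-u}`. -/

open Real MeasureTheory

theorem RCLike.norm_integral_sq_eq_integral_integral_re_mul_conj {𝕜 α : Type*} [RCLike 𝕜]
    [MeasurableSpace α] {μ : Measure α} {f : α → 𝕜} (hf : Integrable f μ) :
    ‖∫ t, f t ∂μ‖ ^ 2 = ∫ u, ∫ t, RCLike.re (f t * starRingEnd 𝕜 (f u)) ∂μ ∂μ := by
  have hfc : Integrable (fun u => starRingEnd 𝕜 (f u)) μ :=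
    RCLike.conjLIE.integrable_comp_iff.mpr hf
  calc ‖∫ t, f t ∂μ‖ ^ 2
      = RCLike.re ((∫ t, f t ∂μ) * starRingEnd 𝕜 (∫ t, f t ∂μ)) := by
        rw [RCLike.mul_conj, ← RCLike.ofReal_pow, RCLike.ofReal_re]
    _ = RCLike.re (∫ u, ∫ t, f t * starRingEnd 𝕜 (f u) ∂μ ∂μ) := by
        simp only [← integral_conj, ← integral_mul_const, ← integral_const_mul]
    _ = ∫ u, RCLike.re (∫ t, f t * starRingEnd 𝕜 (f u) ∂μ) ∂μ := by
        refine (integral_re ?_).symm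
        simpa only [integral_mul_const] using hfc.const_mul (∫ t, f t ∂μ)
    _ = ∫ u, ∫ t, RCLike.re (f t * starRingEnd 𝕜 (f u)) ∂μ ∂μ := by
        congr 1 with u
        exact (integral_re (hf.mul_const _)).symm

theorem Complex.ofReal_cpow_add_mul_I {t : ℝ} (ht : 0 < t) (a b : ℝ) :
    (t : ℂ) ^ ((a : ℂ) + b * I) = (t ^ a : ℝ) * exp ((b * Real.log t : ℝ) * I) := by
  rw [cpow_add _ _ (ofReal_ne_zero.mpr ht.ne'), ← ofReal_cpow ht.le,
    cpow_def_of_ne_zero (ofReal_ne_zero.mpr ht.ne'), ← ofReal_log ht.le]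
  push_cast
  ring_nf

theorem Complex.re_ofReal_mul_exp_mul_I_mul_conj (A B α β : ℝ) :
    ((A : ℂ) * exp (α * I) * starRingEnd ℂ ((B : ℂ) * exp (β * I))).re =
      Real.cos (α - β) * A * B := by
  have : (A : ℂ) * exp (α * I) * starRingEnd ℂ ((B : ℂ) * exp (β * I))
      = ((A * B : ℝ) : ℂ) * exp ((α - β : ℝ) * I) := by
    rw [map_mul, conj_ofReal, ← exp_conj, map_mul, conj_ofReal, conj_I, mul_mul_mul_comm,
      ← exp_add]
    push_cast
    ring_nf
  rw [this, re_ofReal_mul, exp_ofReal_mul_I_re]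
  ring

theorem Complex.re_gammaIntegrand_mul_conj (ρ x : ℝ) {t u : ℝ} (ht : 0 < t) (hu : 0 < u) :
    ((Real.exp (-t) : ℂ) * (t : ℂ) ^ ((ρ + x * I : ℂ) - 1) *
        starRingEnd ℂ ((Real.exp (-u) : ℂ) * (u : ℂ) ^ ((ρ + x * I : ℂ) - 1))).re =
      Real.cos (x * (Real.log t - Real.log u)) * t ^ (ρ - 1) * u ^ (ρ - 1) * Real.exp (-t - u) := by
  have hexp : ((ρ + x * I : ℂ) - 1) = ((ρ - 1 : ℝ) : ℂ) + x * I := by push_cast; ring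
  rw [hexp, ofReal_cpow_add_mul_I ht, ofReal_cpow_add_mul_I hu, ← mul_assoc, ← mul_assoc,
    ← ofReal_mul, ← ofReal_mul, re_ofReal_mul_exp_mul_I_mul_conj, sub_eq_add_neg (-t),
    Real.exp_add]
  ring_nf

/-- for `ρ > 0` and `x ∈ ℝ`,
`|Γ(ρ + ix)|² = ∫₀^∞∫₀^∞ cos(x·(log t − log u))·t^{ρ−1}·u^{ρ−1}·e^{−t−u} dt du`. -/
theorem stmt15 (ρ x : ℝ) (hρ : 0 < ρ) :
    (‖Complex.Gamma (ρ + x * Complex.I)‖) ^ 2 =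
      ∫ u in Set.Ioi (0 : ℝ), ∫ t in Set.Ioi (0 : ℝ),
        Real.cos (x * (Real.log t - Real.log u)) *
          t ^ (ρ - 1) * u ^ (ρ - 1) * Real.exp (-t - u) := by
  have hs : 0 < (ρ + x * Complex.I : ℂ).re := by simpa using hρ
  rw [Complex.Gamma_eq_integral hs, Complex.GammaIntegral,
    RCLike.norm_integral_sq_eq_integral_integral_re_mul_conj (Complex.GammaIntegral_convergent hs)]
  refine setIntegral_congr_fun measurableSet_Ioi fun u hu => ?_
  refine setIntegral_congr_fun measurableSet_Ioi fun t ht => ?_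
  exact Complex.re_gammaIntegrand_mul_conj ρ x ht hu
end

section
/- Let h : ℝ → [0,∞) be a log-concave probability density with respect to Lebesgue measure (i.e., ∫_ℝ h = 1 and h(t·x + (1−t)·y) ≥ h(x)^t·h(y)^{1−t} for all x, y ∈ ℝ, t ∈ [0,1]), and let m ∈ ℝ be a mode of h, i.e., h(y) ≤ h(m) for all y. Then for all y ∈ ℝ, h(y) ≤ h(m)·min( 1, e^{1 − h(m)·|y − m|} ). -/
open Real MeasureTheory
open scoped Interval

/-! Write `M = h m` and `r = h y / M ∈ (0, 1]`. Log-concavity bounds `h` from below by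
`M r^t` at the point `m + t (y - m)` of the segment from `m` to `y`; integrating along the
segment and using `∫ h = 1` gives `M |y - m| (1 - r) / (-log r) ≤ 1`. With `s = -log r`,
`(1 + s) e^{-s} ≤ 1` turns this into `M |y - m| ≤ 1 + s`, i.e. `r ≤ e^{1 - M |y - m|}`. -/

theorem integral_rpow_zero_one {r : ℝ} (hr0 : 0 < r) (hr1 : r ≠ 1) :
    ∫ t in (0:ℝ)..1, r ^ t = (r - 1) / log r := by
  have hlog : log r ≠ 0 := log_ne_zero_of_pos_of_ne_one hr0 hr1
  simp_rw [rpow_def_of_pos hr0]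
  rw [intervalIntegral.integral_comp_mul_left (fun t => exp t) hlog]
  simp [integral_exp, exp_log hr0, div_eq_inv_mul]

theorem le_exp_one_sub_of_mul_integral_rpow_le_one {r x : ℝ} (hr0 : 0 < r) (hr1 : r ≤ 1)
    (hx : x * ∫ t in (0:ℝ)..1, r ^ t ≤ 1) : r ≤ exp (1 - x) := by
  rcases hr1.eq_or_lt with rfl | hr1
  · simp only [one_rpow, intervalIntegral.integral_const, sub_zero, smul_eq_mul, mul_one] at hx
    exact one_le_exp (by linarith)
  set s := -log r
  have hs : 0 < s := neg_pos.2 (log_neg hr0 hr1)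
  have hrs : r = exp (-s) := by rw [neg_neg, exp_log hr0]
  have hx' : x * (1 - r) ≤ s := by
    rw [integral_rpow_zero_one hr0 hr1.ne, ← neg_div_neg_eq, neg_sub] at hx
    rwa [mul_div_assoc', div_le_one hs] at hx
  have hexp : (1 + s) * r ≤ 1 := by
    rw [hrs]
    calc (1 + s) * exp (-s) ≤ exp s * exp (-s) := by gcongr; linarith [add_one_le_exp s]
      _ = 1 := by rw [← exp_add, add_neg_cancel, exp_zero]
  rw [hrs]
  exact exp_le_exp.2 (by nlinarith)

theorem abs_sub_mul_integral_le_integral_of_le_comp_segment {f g : ℝ → ℝ} (hf : Integrable f)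
    (hf0 : ∀ x, 0 ≤ f x) {a b : ℝ} (hg : IntervalIntegrable g volume 0 1)
    (hgf : ∀ t ∈ Set.Icc (0:ℝ) 1, g t ≤ f ((b - a) * t + a)) :
    |b - a| * ∫ t in (0:ℝ)..1, g t ≤ ∫ x, f x := by
  have hcomp : IntervalIntegrable (fun t => f ((b - a) * t + a)) volume 0 1 := by
    rcases eq_or_ne (b - a) 0 with hc | hc
    · simp [hc]
    · simpa [hc] using ((hf.intervalIntegrable (a := a) (b := b)).comp_add_right a).comp_mul_left
        (c := b - a)
  have hsub := intervalIntegral.smul_integral_comp_mul_add (a := 0) (b := 1) f (b - a) a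
  simp only [mul_zero, zero_add, mul_one, sub_add_cancel, smul_eq_mul] at hsub
  calc |b - a| * ∫ t in (0:ℝ)..1, g t
      ≤ |b - a| * ∫ t in (0:ℝ)..1, f ((b - a) * t + a) := by
        gcongr; exact intervalIntegral.integral_mono_on zero_le_one hg hcomp hgf
    _ ≤ ‖∫ x in a..b, f x‖ := by
        rw [← hsub, norm_mul, norm_eq_abs]; gcongr; exact le_norm_self _
    _ ≤ ∫ x in Ι a b, ‖f x‖ := intervalIntegral.norm_integral_le_integral_norm_uIoc
    _ = ∫ x in Ι a b, f x := by simp_rw [norm_of_nonneg (hf0 _)]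
    _ ≤ ∫ x, f x := setIntegral_le_integral hf (.of_forall hf0)

theorem mul_div_rpow_le_of_logConcave {h : ℝ → ℝ}
    (hlc : ∀ x y t : ℝ, 0 ≤ t → t ≤ 1 →
      h (t * x + (1 - t) * y) ≥ h x ^ t * h y ^ (1 - t))
    {x y t : ℝ} (hx : 0 < h x) (hy : 0 ≤ h y) (ht : t ∈ Set.Icc (0:ℝ) 1) :
    h x * (h y / h x) ^ t ≤ h ((y - x) * t + x) := by
  calc h x * (h y / h x) ^ t = h y ^ t * h x ^ (1 - t) := by
        rw [div_rpow hy hx.le, rpow_sub hx, rpow_one]; field_simp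
    _ ≤ h (t * y + (1 - t) * x) := hlc y x t ht.1 ht.2
    _ = h ((y - x) * t + x) := by ring_nf

theorem le_mul_exp_of_logConcave_density {h : ℝ → ℝ} (h0 : ∀ y, 0 ≤ h y)
    (h1 : ∫ y, h y = 1)
    (hlc : ∀ x y t : ℝ, 0 ≤ t → t ≤ 1 →
      h (t * x + (1 - t) * y) ≥ h x ^ t * h y ^ (1 - t))
    {m : ℝ} (hm : ∀ y, h y ≤ h m) (y : ℝ) :
    h y ≤ h m * exp (1 - h m * |y - m|) := by
  rcases (h0 y).eq_or_lt with hy | hy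
  · rw [← hy]; exact mul_nonneg (h0 m) (exp_nonneg _)
  have hM : 0 < h m := hy.trans_le (hm y)
  set r := h y / h m
  have hr0 : 0 < r := div_pos hy hM
  have hcont : Continuous fun t : ℝ => h m * r ^ t :=
    continuous_const.mul (continuous_const.rpow continuous_id fun _ => .inl hr0.ne')
  have hseg : |y - m| * ∫ t in (0:ℝ)..1, h m * r ^ t ≤ 1 :=
    h1 ▸ abs_sub_mul_integral_le_integral_of_le_comp_segment (integrable_of_integral_eq_one h1) h0
      (hcont.intervalIntegrable _ _) fun t ht => mul_div_rpow_le_of_logConcave hlc hM hy.le ht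
  rw [intervalIntegral.integral_const_mul, ← mul_assoc, mul_comm _ (h m)] at hseg
  calc h y = h m * r := (mul_div_cancel₀ _ hM.ne').symm
    _ ≤ h m * exp (1 - h m * |y - m|) := by
      gcongr
      exact le_exp_one_sub_of_mul_integral_rpow_le_one hr0 (div_le_one_of_le₀ (hm y) hM.le) hseg

/-- if `h` is a log-concave probability density on ℝ with mode `m`
(global maximizer), then `h(y) ≤ h(m)·min(1, e^{1 − h(m)·|y−m|})` for all `y`. -/
theorem stmt18 (h : ℝ → ℝ) (m : ℝ)
    (h0 : ∀ y, 0 ≤ h y) (h1 : ∫ y, h y = 1)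
    (hlc : ∀ x y t : ℝ, 0 ≤ t → t ≤ 1 →
      h (t * x + (1 - t) * y) ≥ h x ^ t * h y ^ (1 - t))
    (hm : ∀ y, h y ≤ h m) :
    ∀ y : ℝ, h y ≤ h m * min 1 (Real.exp (1 - h m * |y - m|)) := by
  intro y
  rw [mul_min_of_nonneg _ _ ((h0 y).trans (hm y)), mul_one]
  exact le_min (hm y) (le_mul_exp_of_logConcave_density h0 h1 hlc hm y)
end

section
/- Let a > 0. The pushforward of the uniform probability measure on (0,1)² under the map (u, u') ↦ √a · sin(2π u') · √( u^{−2/a} − 1 ) is the Student-t distribution with parameter a, i.e., the probability measure on ℝ with density x ↦ 1/( B(a/2, 1/2)·√a·(1 + x²/a)^{(a+1)/2} ), where B denotes the Beta function. -/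
/-!
Bailey's polar method. Put `R = √(a (U^(-2/a) - 1))` and `Θ = π - 2πV`. Since `R` inverts
`r ↦ (1 + r²/a)^(-a/2)`, it has density `r (1 + r²/a)^(-a/2-1)` on `(0, ∞)`, and `Θ` is uniform on
`(-π, π)`. In polar coordinates `(R cos Θ, R sin Θ)` therefore has the rotation-invariant
bivariate Student-t density `(2π)⁻¹ (1 + |z|²/a)^(-a/2-1)`. Its second coordinate is
`R sin (2πV)`, and integrating out the first coordinate (a Beta integral) leaves the Student-t(a)
density.
-/

open Real MeasureTheory Set ProbabilityTheory
open scoped ENNReal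

namespace StudentT

theorem map_restrict_eq_withDensity_of_invOn {s t : Set ℝ} {φ φ' ρ : ℝ → ℝ} {d : ℝ → ℝ≥0∞}
    (hs : MeasurableSet s) (hφ' : ∀ x ∈ s, HasDerivWithinAt φ (φ' x) s x)
    (hinv : InvOn ρ φ s t) (hφ : MapsTo φ s t) (hρ : MapsTo ρ t s) (hρm : Measurable ρ)
    (hdm : Measurable d) (hd : ∀ x ∈ s, ENNReal.ofReal |φ' x| = d x) :
    (volume.restrict t).map ρ = (volume.restrict s).withDensity d := by
  refine Measure.ext_of_lintegral _ fun g hg => ?_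
  rw [lintegral_map hg hρm, ← (hinv.bijOn hφ hρ).image_eq,
    lintegral_image_eq_lintegral_abs_deriv_mul hs hφ' hinv.1.injOn,
    lintegral_withDensity_eq_lintegral_mul _ hdm hg]
  refine setLIntegral_congr_fun hs fun x hx => ?_
  rw [hinv.1 hx, hd x hx, Pi.mul_apply]

theorem map_sqrt_mul_rpow_sub_one {k m : ℝ} (hk : 0 < k) (hm : 0 < m) :
    (volume.restrict (Ioo 0 1)).map (fun t => √(k * (t ^ (-m⁻¹) - 1))) =
      (volume.restrict (Ioi 0)).withDensity
        fun y => ENNReal.ofReal (2 * m / k * y * (1 + y ^ 2 / k) ^ (-m - 1)) := by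
  have hbase (y : ℝ) : 0 < 1 + y ^ 2 / k := by positivity
  have hexp : -m * -m⁻¹ = 1 := by field_simp
  refine map_restrict_eq_withDensity_of_invOn (φ := fun y => (1 + y ^ 2 / k) ^ (-m))
    (φ' := fun y => 2 * y / k * -m * (1 + y ^ 2 / k) ^ (-m - 1)) measurableSet_Ioi
    (fun y _ => ?deriv) ⟨fun y hy => ?left, fun t ht => ?right⟩ (fun y hy => ?mapsTo)
    (fun t ht => ?mapsFrom) (by fun_prop) (by fun_prop) (fun y hy => ?density)
  case deriv =>
    have h : HasDerivAt (fun y => 1 + y ^ 2 / k) (2 * y / k) y := by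
      simpa using ((hasDerivAt_pow 2 y).div_const k).const_add 1
    exact (h.rpow_const (Or.inl (hbase y).ne')).hasDerivWithinAt
  case left =>
    have hy : 0 < y := hy
    simp only
    rw [← rpow_mul (hbase y).le, hexp, rpow_one, add_sub_cancel_left,
      mul_div_cancel₀ _ hk.ne', sqrt_sq hy.le]
  case right =>
    have h1 : 1 ≤ t ^ (-m⁻¹) :=
      (one_lt_rpow_of_pos_of_lt_one_of_neg ht.1 ht.2 (by simpa using hm)).le
    simp only
    rw [sq_sqrt (by nlinarith), mul_div_cancel_left₀ _ hk.ne', add_sub_cancel,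
      ← rpow_mul ht.1.le, mul_comm, hexp, rpow_one]
  case mapsTo =>
    have hy : 0 < y := hy
    exact ⟨rpow_pos_of_pos (hbase y) _, rpow_lt_one_of_one_lt_of_neg
      (lt_add_of_pos_right 1 (by positivity)) (neg_neg_of_pos hm)⟩
  case mapsFrom =>
    have h1 : 1 < t ^ (-m⁻¹) := one_lt_rpow_of_pos_of_lt_one_of_neg ht.1 ht.2 (by simpa using hm)
    exact sqrt_pos.2 (mul_pos hk (sub_pos.2 h1))
  case density =>
    have hy : 0 < y := hy
    congr 1
    rw [abs_of_nonpos (mul_nonpos_of_nonpos_of_nonneg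
      (mul_nonpos_of_nonneg_of_nonpos (by positivity) (by linarith)) (by positivity))]
    ring

theorem map_pi_sub_two_pi_mul :
    (volume.restrict (Ioo 0 1)).map (fun v => π - 2 * π * v) =
      (volume.restrict (Ioo (-π) π)).withDensity fun _ => ENNReal.ofReal (2 * π)⁻¹ := by
  have hπ := two_pi_pos
  refine map_restrict_eq_withDensity_of_invOn (φ := fun θ => (π - θ) / (2 * π))
    (φ' := fun _ => -1 / (2 * π)) measurableSet_Ioo
    (fun θ _ => ((hasDerivAt_id θ).const_sub π).div_const (2 * π) |>.hasDerivWithinAt)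
    ⟨fun θ _ => ?_, fun v _ => ?_⟩ (fun θ hθ => ?_) (fun v hv => ?_) (by fun_prop)
    measurable_const (fun _ _ => ?_)
  · field_simp; ring
  · field_simp; ring
  · exact ⟨div_pos (by linarith [hθ.2]) hπ, (div_lt_one hπ).2 (by linarith [hθ.1, pi_pos])⟩
  · constructor <;> nlinarith [hv.1, hv.2, pi_pos]
  · rw [abs_div, abs_neg, abs_one, abs_of_pos hπ, one_div]

theorem map_polarCoord_symm_withDensity {f : ℝ × ℝ → ℝ≥0∞} (hf : Measurable f) :
    ((volume.restrict polarCoord.target).withDensity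
        fun p => ENNReal.ofReal p.1 * f (polarCoord.symm p)).map polarCoord.symm =
      volume.withDensity f := by
  have hm : Measurable polarCoord.symm := continuous_polarCoord_symm.measurable
  refine Measure.ext_of_lintegral _ fun g hg => ?_
  rw [lintegral_map hg hm, lintegral_withDensity_eq_lintegral_mul
      (g := fun p => g (polarCoord.symm p)) _ (by fun_prop) (hg.comp hm),
    lintegral_withDensity_eq_lintegral_mul _ hf hg, ← lintegral_comp_polarCoord_symm]
  simp only [Pi.mul_apply, smul_eq_mul, mul_assoc]

theorem map_snd_prod_withDensity {α β : Type*} [MeasurableSpace α] [MeasurableSpace β]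
    {μ : Measure α} {ν : Measure β} [SFinite μ] [SFinite ν] {f : α × β → ℝ≥0∞}
    (hf : Measurable f) :
    ((μ.prod ν).withDensity f).map Prod.snd = ν.withDensity fun y => ∫⁻ x, f (x, y) ∂μ := by
  refine Measure.ext_of_lintegral _ fun g hg => ?_
  rw [lintegral_map hg measurable_snd,
    lintegral_withDensity_eq_lintegral_mul (g := fun p => g p.2) _ hf (hg.comp measurable_snd),
    lintegral_prod_symm _ (by fun_prop),
    lintegral_withDensity_eq_lintegral_mul _ hf.lintegral_prod_left' hg]
  exact lintegral_congr fun y => lintegral_mul_const (g y) (hf.comp measurable_prodMk_right)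

theorem setLIntegral_Ioo_rpow_mul_one_sub_rpow {α β : ℝ} (hα : 0 < α) (hβ : 0 < β) :
    ∫⁻ t in Ioo 0 1, ENNReal.ofReal (t ^ (α - 1) * (1 - t) ^ (β - 1)) =
      ENNReal.ofReal (beta α β) := by
  have hB := beta_pos hα hβ
  have h := lintegral_betaPDF_eq_one hα hβ
  simp_rw [lintegral_betaPDF, mul_assoc, ENNReal.ofReal_mul (one_div_pos.2 hB).le] at h
  rw [lintegral_const_mul' _ _ ENNReal.ofReal_ne_top] at h
  calc _ = ENNReal.ofReal (beta α β) * ENNReal.ofReal (1 / beta α β) *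
        ∫⁻ t in Ioo 0 1, ENNReal.ofReal (t ^ (α - 1) * (1 - t) ^ (β - 1)) := by
        rw [← ENNReal.ofReal_mul hB.le, mul_one_div_cancel hB.ne', ENNReal.ofReal_one, one_mul]
    _ = ENNReal.ofReal (beta α β) := by rw [mul_assoc, h, mul_one]

theorem setLIntegral_Ioi_one_add_sq_div_rpow_neg {k p : ℝ} (hk : 0 < k) (hp : 1 / 2 < p) :
    ∫⁻ y in Ioi 0, ENNReal.ofReal ((1 + y ^ 2 / k) ^ (-p)) =
      ENNReal.ofReal (√k / 2 * beta (p - 1 / 2) (1 / 2)) := by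
  have hbase (y : ℝ) : 0 < 1 + y ^ 2 / k := by positivity
  -- the integrand divided by the density of `√(k (t⁻¹ - 1))` for `t` uniform on `(0, 1)`
  set F : ℝ → ℝ≥0∞ := fun y => ENNReal.ofReal (k / (2 * y) * (1 + y ^ 2 / k) ^ (2 - p))
  have hF : Measurable F := by fun_prop
  calc ∫⁻ y in Ioi 0, ENNReal.ofReal ((1 + y ^ 2 / k) ^ (-p))
      = ∫⁻ y in Ioi 0, ENNReal.ofReal (2 * 1 / k * y * (1 + y ^ 2 / k) ^ (-1 - 1 : ℝ)) * F y := by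
        refine setLIntegral_congr_fun measurableSet_Ioi fun y (hy : 0 < y) => ?_
        rw [← ENNReal.ofReal_mul (by positivity)]
        congr 1
        have h : (1 + y ^ 2 / k) ^ (-1 - 1 : ℝ) * (1 + y ^ 2 / k) ^ (2 - p) =
            (1 + y ^ 2 / k) ^ (-p) := by
          rw [← rpow_add (hbase y)]; ring_nf
        rw [← h]
        field_simp
    _ = ∫⁻ y, F y ∂(volume.restrict (Ioo 0 1)).map (fun t => √(k * (t ^ (-(1 : ℝ)⁻¹) - 1))) := by
        rw [map_sqrt_mul_rpow_sub_one hk one_pos, lintegral_withDensity_eq_lintegral_mul _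
          (by fun_prop) hF]
        rfl
    _ = ∫⁻ t in Ioo 0 1, ENNReal.ofReal (√k / 2) *
          ENNReal.ofReal (t ^ (p - 1 / 2 - 1) * (1 - t) ^ (1 / 2 - 1 : ℝ)) := by
        rw [lintegral_map hF (by fun_prop)]
        refine setLIntegral_congr_fun measurableSet_Ioo fun t ht => ?_
        have ht0 : 0 < t := ht.1
        have ht1 : 0 < 1 - t := sub_pos.2 ht.2
        have hρ : √(k * (t ^ (-(1 : ℝ)⁻¹) - 1)) = √k * √(1 - t) / √t := by
          rw [inv_one, rpow_neg_one, sqrt_mul hk.le, show t⁻¹ - 1 = (1 - t) / t by field_simp,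
            sqrt_div ht1.le, mul_div_assoc]
        have hbase' : 1 + (√k * √(1 - t) / √t) ^ 2 / k = t⁻¹ := by
          rw [div_pow, mul_pow, sq_sqrt hk.le, sq_sqrt ht1.le, sq_sqrt ht0.le]
          field_simp
          ring
        have h1 : t ^ (p - 1 / 2 - 1) = t ^ (p - 2) * √t := by
          rw [sqrt_eq_rpow, ← rpow_add ht0]; ring_nf
        have h2 : (1 - t) ^ (1 / 2 - 1 : ℝ) = (√(1 - t))⁻¹ := by
          rw [sqrt_eq_rpow, ← rpow_neg ht1.le]; norm_num
        simp only [F]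
        rw [← ENNReal.ofReal_mul (by positivity), hρ, hbase', inv_rpow ht0.le, ← rpow_neg ht0.le,
          neg_sub, h1, h2]
        congr 1
        field_simp
        rw [sq_sqrt hk.le]
    _ = ENNReal.ofReal (√k / 2 * beta (p - 1 / 2) (1 / 2)) := by
        rw [lintegral_const_mul' _ _ ENNReal.ofReal_ne_top,
          setLIntegral_Ioo_rpow_mul_one_sub_rpow (by linarith) one_half_pos,
          ← ENNReal.ofReal_mul (by positivity)]

theorem lintegral_eq_two_mul_setLIntegral_Ioi_of_even {f : ℝ → ℝ≥0∞} (hf : ∀ y, f (-y) = f y) :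
    ∫⁻ y, f y = 2 * ∫⁻ y in Ioi 0, f y := by
  have hneg : ∫⁻ y in Iic 0, f y = ∫⁻ y in Ioi 0, f y := by
    rw [Measure.restrict_congr_set Iio_ae_eq_Iic.symm, ← neg_zero, ← image_neg_Ioi,
      lintegral_image_eq_lintegral_abs_deriv_mul measurableSet_Ioi
        (fun y _ => (hasDerivAt_neg y).hasDerivWithinAt) neg_injective.injOn]
    simp [hf]
  rw [← lintegral_add_compl _ measurableSet_Ioi, compl_Ioi, hneg, two_mul]

theorem lintegral_one_add_sq_div_rpow_neg {k p : ℝ} (hk : 0 < k) (hp : 1 / 2 < p) :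
    ∫⁻ y, ENNReal.ofReal ((1 + y ^ 2 / k) ^ (-p)) =
      ENNReal.ofReal (√k * beta (p - 1 / 2) (1 / 2)) := by
  rw [lintegral_eq_two_mul_setLIntegral_Ioi_of_even (fun y => by rw [neg_sq]),
    setLIntegral_Ioi_one_add_sq_div_rpow_neg hk hp, ← ENNReal.ofReal_ofNat 2,
    ← ENNReal.ofReal_mul zero_le_two]
  ring_nf

theorem beta_add_half_mul_beta {s : ℝ} (hs : 0 < s) :
    beta (s + 1 / 2) (1 / 2) * beta s (1 / 2) = π / s := by
  have h1 : Gamma (s + 1 / 2 + 1 / 2) = s * Gamma s := by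
    rw [add_assoc, add_halves, Gamma_add_one hs.ne']
  have h2 : Gamma (s + 1 / 2) ≠ 0 := (Gamma_pos_of_pos (by positivity)).ne'
  have h3 : Gamma s ≠ 0 := (Gamma_pos_of_pos hs).ne'
  simp only [beta, h1, Gamma_one_half_eq]
  field_simp
  rw [sq_sqrt pi_pos.le]

noncomputable def bivariateStudentTPDF (a : ℝ) (z : ℝ × ℝ) : ℝ≥0∞ :=
  ENNReal.ofReal ((1 + (z.1 ^ 2 + z.2 ^ 2) / a) ^ (-(a / 2) - 1) / (2 * π))

theorem measurable_bivariateStudentTPDF (a : ℝ) : Measurable (bivariateStudentTPDF a) := by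
  unfold bivariateStudentTPDF; fun_prop

theorem map_prod_map_eq_bivariateStudentT {a : ℝ} (ha : 0 < a) :
    ((volume.restrict (Ioo 0 1)).prod (volume.restrict (Ioo 0 1))).map
        (polarCoord.symm ∘ Prod.map (fun u => √(a * (u ^ (-(a / 2)⁻¹) - 1)))
          (fun v => π - 2 * π * v)) =
      volume.withDensity (bivariateStudentTPDF a) := by
  rw [← Measure.map_map continuous_polarCoord_symm.measurable (by fun_prop),
    ← Measure.map_prod_map _ _ (by fun_prop) (by fun_prop),
    map_sqrt_mul_rpow_sub_one ha (half_pos ha), map_pi_sub_two_pi_mul,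
    prod_withDensity (by fun_prop) measurable_const, Measure.prod_restrict,
    ← Measure.volume_eq_prod, ← polarCoord_target,
    ← map_polarCoord_symm_withDensity (measurable_bivariateStudentTPDF a)]
  congr 1
  refine withDensity_congr_ae (ae_restrict_of_forall_mem polarCoord.open_target.measurableSet
    fun p ⟨(hr0 : 0 < p.1), _⟩ => ?_)
  have hr : (p.1 * cos p.2) ^ 2 + (p.1 * sin p.2) ^ 2 = p.1 ^ 2 := by
    rw [mul_pow, mul_pow, ← mul_add, cos_sq_add_sin_sq, mul_one]
  simp only [bivariateStudentTPDF, polarCoord_symm_apply]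
  rw [hr, ← ENNReal.ofReal_mul (by positivity), ← ENNReal.ofReal_mul hr0.le]
  congr 1
  field_simp

theorem lintegral_bivariateStudentTPDF {a : ℝ} (ha : 0 < a) (x : ℝ) :
    ∫⁻ y, bivariateStudentTPDF a (y, x) =
      ENNReal.ofReal (1 / (beta (a / 2) (1 / 2) * √a * (1 + x ^ 2 / a) ^ ((a + 1) / 2))) := by
  set c := 1 + x ^ 2 / a
  have hc : 0 < c := by positivity
  have hsplit (y : ℝ) : bivariateStudentTPDF a (y, x) =
      ENNReal.ofReal (c ^ (-(a / 2) - 1) / (2 * π)) *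
        ENNReal.ofReal ((1 + y ^ 2 / (a * c)) ^ (-(a / 2 + 1))) := by
    rw [bivariateStudentTPDF, ← ENNReal.ofReal_mul (by positivity)]
    congr 1
    have : 1 + (y ^ 2 + x ^ 2) / a = c * (1 + y ^ 2 / (a * c)) := by
      simp only [c]; field_simp; ring
    rw [this, mul_rpow hc.le (by positivity), neg_add']
    ring
  have hB₀ := beta_pos (half_pos ha) one_half_pos
  have hB : beta (a / 2 + 1 - 1 / 2) (1 / 2) = π / (a / 2) / beta (a / 2) (1 / 2) := by
    rw [eq_div_iff hB₀.ne', ← beta_add_half_mul_beta (half_pos ha)]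
    ring_nf
  have hpow : c ^ (-(a / 2) - 1) * (c ^ ((a + 1) / 2) * √c) = 1 := by
    rw [sqrt_eq_rpow, ← rpow_add hc, ← rpow_add hc]
    ring_nf
    exact rpow_zero c
  simp_rw [hsplit]
  rw [lintegral_const_mul' _ _ ENNReal.ofReal_ne_top,
    lintegral_one_add_sq_div_rpow_neg (by positivity) (by linarith),
    ← ENNReal.ofReal_mul (div_nonneg (rpow_nonneg hc.le _) two_pi_pos.le), hB, sqrt_mul ha.le,
    eq_inv_of_mul_eq_one_left hpow]
  congr 1
  field_simp
  exact sq_sqrt ha.le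

end StudentT

open StudentT in
/-- Bailey's polar method: for `a > 0`, the pushforward of the
uniform measure on `(0,1)²` under
`(u, u') ↦ √a·sin(2πu')·√(u^{−2/a} − 1)`
is the Student-t(a) distribution, with density
`x ↦ 1/(B(a/2, 1/2)·√a·(1 + x²/a)^{(a+1)/2})`, where
`B(p,q) = Γ(p)Γ(q)/Γ(p+q)`. -/
theorem stmt19 (a : ℝ) (ha : 0 < a) :
    Measure.map
      (fun p : ℝ × ℝ =>
        Real.sqrt a * Real.sin (2 * π * p.2) * Real.sqrt (p.1 ^ (-2 / a) - 1))
      ((volume : Measure (ℝ × ℝ)).restrict (Set.Ioo (0 : ℝ) 1 ×ˢ Set.Ioo (0 : ℝ) 1)) =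
    volume.withDensity (fun x : ℝ =>
      ENNReal.ofReal
        (1 / ((Real.Gamma (a / 2) * Real.Gamma (1 / 2) / Real.Gamma (a / 2 + 1 / 2)) *
          Real.sqrt a * (1 + x ^ 2 / a) ^ ((a + 1) / 2)))) := by
  have hT : (fun p : ℝ × ℝ => √a * sin (2 * π * p.2) * √(p.1 ^ (-2 / a) - 1)) =
      Prod.snd ∘ polarCoord.symm ∘ Prod.map (fun u => √(a * (u ^ (-(a / 2)⁻¹) - 1)))
        (fun v => π - 2 * π * v) := by
    have hexp : -(a / 2)⁻¹ = -2 / a := by field_simp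
    ext p
    simp only [Function.comp_apply, Prod.map, polarCoord_symm_apply, sin_pi_sub, hexp,
      sqrt_mul ha.le]
    ring
  rw [hT, ← Measure.map_map measurable_snd (by fun_prop), Measure.volume_eq_prod,
    ← Measure.prod_restrict, map_prod_map_eq_bivariateStudentT ha, Measure.volume_eq_prod ℝ ℝ,
    map_snd_prod_withDensity (measurable_bivariateStudentTPDF a)]
  exact congrArg _ (funext (lintegral_bivariateStudentTPDF ha))
end
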